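/- Let n ≥ 2 be a natural number, T > 0, and 0 < α ≤ 1 ≤ β. Let f : [0,∞) × [0,T] → ℝ be continuous, twice continuously differentiable in r and once in t on (0,∞) × (0,T], satisfying the parabolic equation ∂_t f = f⁻² ∂²_r f − 2 f⁻³ (∂_r f)² + ((n−1)/r − 1/(r f²)) ∂_r f − ((n−1)/(r² f)) (f² − 1) for all r > 0 and t ∈ (0,T], with α ≤ f(r,0) ≤ β for all r ≥ 0, f(0,t) = 1 for all t, and f(r,t) → 1 as r → ∞ uniformly in t. Then α ≤ f(r,t) ≤ β for all (r,t) ∈ [0,∞) × [0,T]. -/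

import Mathlib

/-!
If `f` drops below `α`, pick a level `c ∈ (0, α)` that it reaches. Since `f > c` at `t = 0`, at
`r = 0` and, uniformly in `t`, for large `r`, compactness yields a first time `t₀ > 0` and a radius
`r₀ > 0` at which `f` touches `c` from above. There `∂ᵣf = 0`, `∂ᵣ²f ≥ 0` and `∂ₜf ≤ 0`, whereas
the equation gives `∂ₜf = c⁻² ∂ᵣ²f + (n - 1)(1 - c²) / (r₀² c) > 0`. Exceeding `β` is ruled out
in the same way at a level `c > 1`.
-/

open Set Filter Topology

theorem IsLocalMin.nonneg_of_hasDerivAt_hasDerivAt {g g' : ℝ → ℝ} {a g'' : ℝ}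
    (h : IsLocalMin g a) (hg : ∀ᶠ y in 𝓝 a, HasDerivAt g (g' y) y)
    (hg' : HasDerivAt g' g'' a) : 0 ≤ g'' := by
  by_contra! hneg
  have hderiv : deriv g =ᶠ[𝓝 a] g' := hg.mono fun y hy => hy.deriv
  have hsecond : deriv (deriv g) a = g'' := (hg'.congr_of_eventuallyEq hderiv).deriv
  have hmax : IsLocalMax g a :=
    isLocalMax_of_deriv_deriv_neg (hsecond ▸ hneg) h.deriv_eq_zero
      hg.self_of_nhds.continuousAt
  -- a local minimum that is also a local maximum makes `g` locally constant, so `g'' = 0`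
  have hconst : ∀ᶠ y in 𝓝 a, g y = g a :=
    (h.and hmax).mono fun y hy => le_antisymm hy.2 hy.1
  have hzero : (fun _ => (0 : ℝ)) =ᶠ[𝓝 a] g' := by
    filter_upwards [hconst.eventually_nhds, hg] with y hy hgy
    exact ((hasDerivAt_const y (g a)).congr_of_eventuallyEq hy).unique hgy
  have := (hg'.congr_of_eventuallyEq hzero).unique (hasDerivAt_const a 0)
  linarith

theorem IsLocalMax.nonpos_of_hasDerivAt_hasDerivAt {g g' : ℝ → ℝ} {a g'' : ℝ}
    (h : IsLocalMax g a) (hg : ∀ᶠ y in 𝓝 a, HasDerivAt g (g' y) y)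
    (hg' : HasDerivAt g' g'' a) : g'' ≤ 0 := by
  simpa using h.neg.nonneg_of_hasDerivAt_hasDerivAt (hg.mono fun _ hy => hy.neg) hg'.neg

theorem IsLocalMinOn.hasDerivWithinAt_nonpos_of_right {g : ℝ → ℝ} {a b g' : ℝ} (hab : a < b)
    (h : IsLocalMinOn g (Icc a b) b) (hg : HasDerivWithinAt g g' (Icc a b) b) : g' ≤ 0 := by
  have hdir : a - b ∈ posTangentConeAt (Icc a b) b :=
    sub_mem_posTangentConeAt_of_segment_subset (segment_symm ℝ b a ▸ segment_subset_Icc hab.le)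
  have := h.hasFDerivWithinAt_nonneg hg.hasFDerivWithinAt hdir
  simp only [ContinuousLinearMap.toSpanSingleton_apply, smul_eq_mul] at this
  nlinarith

theorem IsLocalMaxOn.hasDerivWithinAt_nonneg_of_right {g : ℝ → ℝ} {a b g' : ℝ} (hab : a < b)
    (h : IsLocalMaxOn g (Icc a b) b) (hg : HasDerivWithinAt g g' (Icc a b) b) : 0 ≤ g' := by
  simpa using h.neg.hasDerivWithinAt_nonpos_of_right hab hg.neg

theorem exists_first_hitting_time {X : Type*} [TopologicalSpace X] [T2Space X] {K : Set X}
    (hK : IsCompact K) {f : X → ℝ → ℝ} {T c : ℝ}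
    (hf : ContinuousOn (fun q : X × ℝ => f q.1 q.2) (K ×ˢ Icc 0 T))
    (hinit : ∀ x ∈ K, c < f x 0) {x : X} (hx : x ∈ K) {t : ℝ} (ht : t ∈ Icc 0 T)
    (hxt : f x t ≤ c) :
    ∃ x₀ ∈ K, ∃ t₀ ∈ Ioc 0 T, f x₀ t₀ = c ∧ ∀ y ∈ K, ∀ s ∈ Icc 0 t₀, c ≤ f y s := by
  set B := K ×ˢ Icc 0 T ∩ (fun q : X × ℝ => f q.1 q.2) ⁻¹' Iic c
  have hB : IsCompact B := (hK.prod isCompact_Icc).of_isClosed_subset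
    (hf.preimage_isClosed_of_isClosed (hK.isClosed.prod isClosed_Icc) isClosed_Iic)
    inter_subset_left
  obtain ⟨⟨x₀, t₀⟩, ⟨⟨hx₀, ht₀⟩, hval⟩, hfirst⟩ :=
    hB.exists_isMinOn ⟨(x, t), ⟨hx, ht⟩, hxt⟩ continuous_snd.continuousOn
  have ht₀pos : 0 < t₀ := ht₀.1.lt_of_ne fun h => (h ▸ hinit x₀ hx₀).not_ge hval
  have hbefore : ∀ y ∈ K, ∀ s ∈ Ico 0 t₀, c ≤ f y s := fun y hy s hs =>
    le_of_not_ge fun hys => hs.2.not_ge <|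
      hfirst (show (y, s) ∈ B from ⟨⟨hy, hs.1, hs.2.le.trans ht₀.2⟩, hys⟩)
  have hupto : ∀ y ∈ K, ∀ s ∈ Icc 0 t₀, c ≤ f y s := by
    intro y hy s hs
    have hcont : ContinuousOn (f y ·) (Icc 0 t₀) :=
      hf.comp (Continuous.prodMk_right y).continuousOn fun s hs => ⟨hy, hs.1, hs.2.trans ht₀.2⟩
    rw [← closure_Ico ht₀pos.ne] at hs hcont
    exact le_on_closure (hbefore y hy) continuousOn_const hcont hs
  exact ⟨x₀, hx₀, t₀, ⟨ht₀pos, ht₀.2⟩, le_antisymm hval (hupto x₀ hx₀ t₀ ⟨ht₀.1, le_rfl⟩),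
    hupto⟩

theorem exists_contact_below {f : ℝ → ℝ → ℝ} {T c : ℝ}
    (hf : ContinuousOn (fun q : ℝ × ℝ => f q.1 q.2) (Ici 0 ×ˢ Icc 0 T))
    (hinit : ∀ x ≥ 0, c < f x 0) (hbdry : ∀ t ∈ Icc 0 T, c < f 0 t)
    (htail : ∃ M, ∀ x ≥ M, ∀ t ∈ Icc 0 T, c < f x t)
    {x t : ℝ} (hx : 0 ≤ x) (ht : t ∈ Icc 0 T) (hxt : f x t ≤ c) :
    ∃ x₀ > 0, ∃ t₀ ∈ Ioc 0 T, f x₀ t₀ = c ∧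
      IsMinOn (f · t₀) (Ici 0) x₀ ∧ IsMinOn (f x₀ ·) (Icc 0 t₀) t₀ := by
  obtain ⟨M, hM⟩ := htail
  obtain ⟨x₀, hx₀, t₀, ht₀, hval, hmin⟩ :=
    exists_first_hitting_time (K := Icc 0 (max M x)) isCompact_Icc
      (hf.mono (prod_mono Icc_subset_Ici_self le_rfl)) (fun y hy => hinit y hy.1)
      ⟨hx, le_max_right M x⟩ ht hxt
  have ht₀' : t₀ ∈ Icc 0 T := ⟨ht₀.1.le, ht₀.2⟩
  have hx₀pos : 0 < x₀ := hx₀.1.lt_of_ne fun h => (h ▸ hbdry t₀ ht₀').not_ge hval.le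
  refine ⟨x₀, hx₀pos, t₀, ht₀, hval, fun y (hy : 0 ≤ y) => show f x₀ t₀ ≤ f y t₀ from ?_,
    fun s hs => show f x₀ t₀ ≤ f x₀ s from hval.trans_le (hmin x₀ hx₀ s hs)⟩
  rw [hval]
  rcases le_or_gt y (max M x) with hyK | hyM
  · exact hmin y ⟨hy, hyK⟩ t₀ ⟨ht₀.1.le, le_rfl⟩
  · exact (hM y (le_max_left M x |>.trans hyM.le) t₀ ht₀').le

/-- Right-hand side of the evolution equation of `f = exp λ`, evaluated at radius `r` on the
values `F`, `Fr`, `Frr` of `f`, `∂ᵣf`, `∂ᵣ²f`. -/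
noncomputable def deturckOperator (n : ℕ) (r F Fr Frr : ℝ) : ℝ :=
  (F ^ 2)⁻¹ * Frr - 2 * (F ^ 3)⁻¹ * Fr ^ 2 + (((n : ℝ) - 1) / r - 1 / (r * F ^ 2)) * Fr -
    (((n : ℝ) - 1) / (r ^ 2 * F)) * (F ^ 2 - 1)

theorem deturckOperator_pos_of_lt_one {n : ℕ} (hn : 1 < n) {r F Frr : ℝ} (hr : 0 < r)
    (hF : 0 < F) (hF1 : F < 1) (hFrr : 0 ≤ Frr) : 0 < deturckOperator n r F 0 Frr := by
  have hn' : (0 : ℝ) < n - 1 := sub_pos.2 (by exact_mod_cast hn)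
  have hdiff : 0 ≤ (F ^ 2)⁻¹ * Frr := by positivity
  have hreact : 0 < ((n : ℝ) - 1) / (r ^ 2 * F) * (1 - F ^ 2) := by
    have : F ^ 2 < 1 := pow_lt_one₀ hF.le hF1 two_ne_zero
    have : 0 < 1 - F ^ 2 := by linarith
    positivity
  simp only [deturckOperator]
  linarith

theorem deturckOperator_neg_of_one_lt {n : ℕ} (hn : 1 < n) {r F Frr : ℝ} (hr : 0 < r)
    (hF1 : 1 < F) (hFrr : Frr ≤ 0) : deturckOperator n r F 0 Frr < 0 := by
  have hn' : (0 : ℝ) < n - 1 := sub_pos.2 (by exact_mod_cast hn)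
  have hF : 0 < F := one_pos.trans hF1
  have hdiff : (F ^ 2)⁻¹ * Frr ≤ 0 := mul_nonpos_of_nonneg_of_nonpos (by positivity) hFrr
  have hreact : 0 < ((n : ℝ) - 1) / (r ^ 2 * F) * (F ^ 2 - 1) := by
    have : 0 < F ^ 2 - 1 := by nlinarith
    positivity
  simp only [deturckOperator]
  linarith

structure IsDeturckSolution (n : ℕ) (T : ℝ) (f ft fr frr : ℝ → ℝ → ℝ) : Prop where
  continuousOn : ContinuousOn (fun q : ℝ × ℝ => f q.1 q.2) (Ici 0 ×ˢ Icc 0 T)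
  hasDerivWithinAt_time : ∀ x > (0 : ℝ), ∀ t ∈ Ioc 0 T,
    HasDerivWithinAt (fun τ => f x τ) (ft x t) (Icc 0 T) t
  hasDerivAt_radius : ∀ x > (0 : ℝ), ∀ t ∈ Ioc 0 T, HasDerivAt (fun y => f y t) (fr x t) x
  hasDerivAt_radius_two : ∀ x > (0 : ℝ), ∀ t ∈ Ioc 0 T,
    HasDerivAt (fun y => fr y t) (frr x t) x
  evolution : ∀ x > (0 : ℝ), ∀ t ∈ Ioc 0 T,
    ft x t = deturckOperator n x (f x t) (fr x t) (frr x t)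

namespace IsDeturckSolution

variable {n : ℕ} {T : ℝ} {f ft fr frr : ℝ → ℝ → ℝ}

theorem eventually_hasDerivAt_radius (hs : IsDeturckSolution n T f ft fr frr) {x t : ℝ}
    (hx : 0 < x) (ht : t ∈ Ioc 0 T) : ∀ᶠ y in 𝓝 x, HasDerivAt (fun y => f y t) (fr y t) y :=
  eventually_of_mem (Ioi_mem_nhds hx) fun y hy => hs.hasDerivAt_radius y hy t ht

theorem not_isMinOn_of_lt_one (hs : IsDeturckSolution n T f ft fr frr) (hn : 1 < n)
    {x t : ℝ} (hx : 0 < x) (ht : t ∈ Ioc 0 T) (hf : 0 < f x t) (hf1 : f x t < 1)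
    (hradius : IsMinOn (f · t) (Ici 0) x) (htime : IsMinOn (f x ·) (Icc 0 t) t) : False := by
  have hmin : IsLocalMin (f · t) x := hradius.isLocalMin (Ici_mem_nhds hx)
  have hfr : fr x t = 0 := hmin.hasDerivAt_eq_zero (hs.hasDerivAt_radius x hx t ht)
  have hfrr : 0 ≤ frr x t := hmin.nonneg_of_hasDerivAt_hasDerivAt
    (hs.eventually_hasDerivAt_radius hx ht) (hs.hasDerivAt_radius_two x hx t ht)
  have hft : ft x t ≤ 0 := htime.localize.hasDerivWithinAt_nonpos_of_right ht.1
    ((hs.hasDerivWithinAt_time x hx t ht).mono (Icc_subset_Icc_right ht.2))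
  have := deturckOperator_pos_of_lt_one hn hx hf hf1 hfrr
  rw [← hfr, ← hs.evolution x hx t ht] at this
  linarith

theorem not_isMaxOn_of_one_lt (hs : IsDeturckSolution n T f ft fr frr) (hn : 1 < n)
    {x t : ℝ} (hx : 0 < x) (ht : t ∈ Ioc 0 T) (hf1 : 1 < f x t)
    (hradius : IsMaxOn (f · t) (Ici 0) x) (htime : IsMaxOn (f x ·) (Icc 0 t) t) : False := by
  have hmax : IsLocalMax (f · t) x := hradius.isLocalMax (Ici_mem_nhds hx)
  have hfr : fr x t = 0 := hmax.hasDerivAt_eq_zero (hs.hasDerivAt_radius x hx t ht)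
  have hfrr : frr x t ≤ 0 := hmax.nonpos_of_hasDerivAt_hasDerivAt
    (hs.eventually_hasDerivAt_radius hx ht) (hs.hasDerivAt_radius_two x hx t ht)
  have hft : 0 ≤ ft x t := htime.localize.hasDerivWithinAt_nonneg_of_right ht.1
    ((hs.hasDerivWithinAt_time x hx t ht).mono (Icc_subset_Icc_right ht.2))
  have := deturckOperator_neg_of_one_lt hn hx hf1 hfrr
  rw [← hfr, ← hs.evolution x hx t ht] at this
  linarith

theorem le_of_le_initial (hs : IsDeturckSolution n T f ft fr frr) (hn : 1 < n)
    (hbdry : ∀ t ∈ Icc 0 T, f 0 t = 1)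
    (hlim : ∀ ε > (0 : ℝ), ∃ M : ℝ, ∀ x ≥ M, ∀ t ∈ Icc 0 T, |f x t - 1| ≤ ε)
    {α : ℝ} (hα : 0 < α) (hα1 : α ≤ 1) (hinit : ∀ x ≥ 0, α ≤ f x 0) :
    ∀ x ≥ 0, ∀ t ∈ Icc 0 T, α ≤ f x t := by
  intro x hx t ht
  by_contra! hlt
  -- `c > 0` keeps the contact value away from the singularity `f = 0` of the equation
  set c := max (f x t) (α / 2)
  have hcα : c < α := max_lt hlt (half_lt_self hα)
  have hc0 : 0 < c := lt_max_of_lt_right (half_pos hα)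
  have hc1 : c < 1 := hcα.trans_le hα1
  obtain ⟨M, hM⟩ := hlim ((1 - c) / 2) (half_pos (sub_pos.2 hc1))
  obtain ⟨x₀, hx₀, t₀, ht₀, hval, hradius, htime⟩ := exists_contact_below hs.continuousOn
    (fun y hy => hcα.trans_le (hinit y hy)) (fun s hsT => hbdry s hsT ▸ hc1)
    ⟨M, fun y hy s hsT => by linarith [(abs_le.1 (hM y hy s hsT)).1]⟩ hx ht (le_max_left _ _)
  exact hs.not_isMinOn_of_lt_one hn hx₀ ht₀ (hval ▸ hc0) (hval ▸ hc1) hradius htime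

theorem le_of_initial_le (hs : IsDeturckSolution n T f ft fr frr) (hn : 1 < n)
    (hbdry : ∀ t ∈ Icc 0 T, f 0 t = 1)
    (hlim : ∀ ε > (0 : ℝ), ∃ M : ℝ, ∀ x ≥ M, ∀ t ∈ Icc 0 T, |f x t - 1| ≤ ε)
    {β : ℝ} (h1β : 1 ≤ β) (hinit : ∀ x ≥ 0, f x 0 ≤ β) :
    ∀ x ≥ 0, ∀ t ∈ Icc 0 T, f x t ≤ β := by
  intro x hx t ht
  by_contra! hlt
  set c := min (f x t) (β + 1)
  have hβc : β < c := lt_min hlt (lt_add_one β)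
  have hc1 : 1 < c := h1β.trans_lt hβc
  obtain ⟨M, hM⟩ := hlim ((c - 1) / 2) (half_pos (sub_pos.2 hc1))
  obtain ⟨x₀, hx₀, t₀, ht₀, hval, hradius, htime⟩ :=
    exists_contact_below (f := fun y s => -f y s) (c := -c) hs.continuousOn.neg
      (fun y hy => neg_lt_neg ((hinit y hy).trans_lt hβc))
      (fun s hsT => by simp [hbdry s hsT, hc1])
      ⟨M, fun y hy s hsT => by linarith [(abs_le.1 (hM y hy s hsT)).2]⟩ hx ht
      (neg_le_neg (min_le_left _ _))
  exact hs.not_isMaxOn_of_one_lt hn hx₀ ht₀ (by linarith) (by simpa using hradius.neg)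
    (by simpa using htime.neg)

end IsDeturckSolution

theorem maximum_principle_hamilton_deturck_general
    (n : ℕ) (hn : 2 ≤ n) (T : ℝ)
    (α β : ℝ) (hα : 0 < α) (hα1 : α ≤ 1) (h1β : 1 ≤ β)
    (f ft fr frr : ℝ → ℝ → ℝ)
    (hf_cont : ContinuousOn (fun q : ℝ × ℝ => f q.1 q.2)
      (Set.Ici (0 : ℝ) ×ˢ Set.Icc (0 : ℝ) T))
    (hft : ∀ x > (0 : ℝ), ∀ t ∈ Set.Ioc (0 : ℝ) T,
      HasDerivWithinAt (fun τ => f x τ) (ft x t) (Set.Icc 0 T) t)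
    (hfr : ∀ x > (0 : ℝ), ∀ t ∈ Set.Ioc (0 : ℝ) T,
      HasDerivAt (fun y => f y t) (fr x t) x)
    (hfrr : ∀ x > (0 : ℝ), ∀ t ∈ Set.Ioc (0 : ℝ) T,
      HasDerivAt (fun y => fr y t) (frr x t) x)
    (hpde : ∀ x > (0 : ℝ), ∀ t ∈ Set.Ioc (0 : ℝ) T,
      ft x t = ((f x t) ^ 2)⁻¹ * frr x t - 2 * ((f x t) ^ 3)⁻¹ * (fr x t) ^ 2 +
        (((n : ℝ) - 1) / x - 1 / (x * (f x t) ^ 2)) * fr x t -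
        (((n : ℝ) - 1) / (x ^ 2 * f x t)) * ((f x t) ^ 2 - 1))
    (hinit : ∀ x ≥ (0 : ℝ), α ≤ f x 0 ∧ f x 0 ≤ β)
    (hbdry : ∀ t ∈ Set.Icc (0 : ℝ) T, f 0 t = 1)
    (hlim : ∀ ε > (0 : ℝ), ∃ M : ℝ, ∀ x ≥ M, ∀ t ∈ Set.Icc (0 : ℝ) T,
      |f x t - 1| ≤ ε) :
    ∀ x ≥ (0 : ℝ), ∀ t ∈ Set.Icc (0 : ℝ) T, α ≤ f x t ∧ f x t ≤ β := by
  have hs : IsDeturckSolution n T f ft fr frr := ⟨hf_cont, hft, hfr, hfrr, hpde⟩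
  intro x hx t ht
  exact ⟨hs.le_of_le_initial hn hbdry hlim hα hα1 (fun y hy => (hinit y hy).1) x hx t ht,
    hs.le_of_initial_le hn hbdry hlim h1β (fun y hy => (hinit y hy).2) x hx t ht⟩

/-- Maximum-principle bound for the Hamilton–DeTurck flow in Schwarzschild form: the
metric coefficient `f = exp(λ)` evolving by the quasilinear parabolic equation
`∂ₜf = f⁻² f_rr - 2 f⁻³ f_r² + ((n-1)/r - 1/(r f²)) f_r - ((n-1)/(r² f))(f² - 1)`
stays between its initial bounds `α ≤ 1 ≤ β`, given `f(0,t) = 1` and `f → 1`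
uniformly as `r → ∞`. -/
theorem maximum_principle_hamilton_deturck
    (n : ℕ) (hn : 2 ≤ n) (T : ℝ) (hT : 0 < T)
    (α β : ℝ) (hα : 0 < α) (hα1 : α ≤ 1) (h1β : 1 ≤ β)
    (f ft fr frr : ℝ → ℝ → ℝ)
    (hf_cont : ContinuousOn (fun q : ℝ × ℝ => f q.1 q.2)
      (Set.Ici (0 : ℝ) ×ˢ Set.Icc (0 : ℝ) T))
    (hft : ∀ x > (0 : ℝ), ∀ t ∈ Set.Ioc (0 : ℝ) T,
      HasDerivWithinAt (fun τ => f x τ) (ft x t) (Set.Icc 0 T) t)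
    (hfr : ∀ x > (0 : ℝ), ∀ t ∈ Set.Ioc (0 : ℝ) T,
      HasDerivAt (fun y => f y t) (fr x t) x)
    (hfrr : ∀ x > (0 : ℝ), ∀ t ∈ Set.Ioc (0 : ℝ) T,
      HasDerivAt (fun y => fr y t) (frr x t) x)
    (hfr_cont : ContinuousOn (fun q : ℝ × ℝ => fr q.1 q.2)
      (Set.Ioi (0 : ℝ) ×ˢ Set.Ioc (0 : ℝ) T))
    (hfrr_cont : ContinuousOn (fun q : ℝ × ℝ => frr q.1 q.2)
      (Set.Ioi (0 : ℝ) ×ˢ Set.Ioc (0 : ℝ) T))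
    (hft_cont : ContinuousOn (fun q : ℝ × ℝ => ft q.1 q.2)
      (Set.Ioi (0 : ℝ) ×ˢ Set.Ioc (0 : ℝ) T))
    (hpde : ∀ x > (0 : ℝ), ∀ t ∈ Set.Ioc (0 : ℝ) T,
      ft x t = ((f x t) ^ 2)⁻¹ * frr x t - 2 * ((f x t) ^ 3)⁻¹ * (fr x t) ^ 2 +
        (((n : ℝ) - 1) / x - 1 / (x * (f x t) ^ 2)) * fr x t -
        (((n : ℝ) - 1) / (x ^ 2 * f x t)) * ((f x t) ^ 2 - 1))
    (hinit : ∀ x ≥ (0 : ℝ), α ≤ f x 0 ∧ f x 0 ≤ β)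
    (hbdry : ∀ t ∈ Set.Icc (0 : ℝ) T, f 0 t = 1)
    (hlim : ∀ ε > (0 : ℝ), ∃ M : ℝ, ∀ x ≥ M, ∀ t ∈ Set.Icc (0 : ℝ) T,
      |f x t - 1| ≤ ε) :
    ∀ x ≥ (0 : ℝ), ∀ t ∈ Set.Icc (0 : ℝ) T, α ≤ f x t ∧ f x t ≤ β :=
  maximum_principle_hamilton_deturck_general n hn T α β hα hα1 h1β f ft fr frr hf_cont hft hfr hfrr
    hpde hinit hbdry hlim
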